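/- There is an absolute constant C > 0 with the following property. Let d₁, d₂ ≥ 0 be integers and D ≥ 0. Let f, g be square-integrable functions on ℝ² supported on B_{d₁} and B_{d₂} respectively, and suppose that |ξ₁ − ξ₂| ≥ D whenever (τ₁,ξ₁) lies in the support of f and (τ₂,ξ₂) lies in the support of g. Then ∥f * g∥_{L²(ℝ²)} ≤ C 2^{(d₁+d₂)/2} (2^{d₁/2} + 2^{d₂/2} + D)^{−1/2} ∥f∥_{L²} ∥g∥_{L²}. -/

import Mathlib

open MeasureTheory Set
open scoped ENNReal NNReal

noncomputable section

/-- The Japanese bracket `⟨x⟩ = (1+|x|²)^{1/2}`. -/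
def jap (x : ℝ) : ℝ := Real.sqrt (1 + x ^ 2)

/-- The dyadic annulus `A_j = {(τ,ξ) : 2^j ≤ ⟨ξ⟩ < 2^{j+1}}`. -/
def Aset (j : ℕ) : Set (ℝ × ℝ) := {p | (2 : ℝ) ^ j ≤ jap p.2 ∧ jap p.2 < (2 : ℝ) ^ (j + 1)}

/-- The parabolic shell `B_d = {(τ,ξ) : 2^d ≤ ⟨τ-ξ²⟩ < 2^{d+1}}`. -/
def Bset (d : ℕ) : Set (ℝ × ℝ) :=
  {p | (2 : ℝ) ^ d ≤ jap (p.1 - p.2 ^ 2) ∧ jap (p.1 - p.2 ^ 2) < (2 : ℝ) ^ (d + 1)}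

/-- `B_{≥d} = ⋃_{d' ≥ d} B_{d'}`. -/
def Bge (d : ℕ) : Set (ℝ × ℝ) := {p | (2 : ℝ) ^ d ≤ jap (p.1 - p.2 ^ 2)}

/-- `B_{≤d} = ⋃_{0 ≤ d' ≤ d} B_{d'}`. -/
def Ble (d : ℕ) : Set (ℝ × ℝ) := {p | jap (p.1 - p.2 ^ 2) < (2 : ℝ) ^ (d + 1)}

/-- `B_{<d} = ⋃_{0 ≤ d' < d} B_{d'}` (empty when `d = 0`). -/
def Blt (d : ℕ) : Set (ℝ × ℝ) := ⋃ (d' : ℕ) (_ : d' < d), Bset d'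

/-- `A_{≤j} = ⋃_{0 ≤ j' ≤ j} A_{j'}`. -/
def Ale (j : ℕ) : Set (ℝ × ℝ) := {p | jap p.2 < (2 : ℝ) ^ (j + 1)}

/-- A reasonable function: bounded, measurable, compactly supported. -/
def Reasonable (f : ℝ × ℝ → ℂ) : Prop :=
  Measurable f ∧ (∃ C : ℝ, ∀ p, ‖f p‖ ≤ C) ∧ HasCompactSupport f

/-- A nonnegative (real-valued) function. -/
def NonnegFn (f : ℝ × ℝ → ℂ) : Prop := ∀ p, 0 ≤ (f p).re ∧ (f p).im = 0

/-- The `L²` norm of `f` restricted to a set `s ⊆ ℝ²`. -/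
def L2On (f : ℝ × ℝ → ℂ) (s : Set (ℝ × ℝ)) : ℝ≥0∞ :=
  (∫⁻ p in s, (‖f p‖₊ : ℝ≥0∞) ^ 2) ^ (1 / 2 : ℝ)

/-- The `L²(ℝ²)` (equivalently `L²_ξ L²_τ`) norm. -/
def L2 (f : ℝ × ℝ → ℂ) : ℝ≥0∞ := (∫⁻ p : ℝ × ℝ, (‖f p‖₊ : ℝ≥0∞) ^ 2) ^ (1 / 2 : ℝ)

/-- The `L¹_ξ L¹_τ` norm. -/
def L1L1 (f : ℝ × ℝ → ℂ) : ℝ≥0∞ := ∫⁻ p : ℝ × ℝ, (‖f p‖₊ : ℝ≥0∞)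

/-- The weighted norm `∥⟨ξ⟩^{-1} f∥_{L²_ξ L¹_τ}` (inner norm in `τ`, outer in `ξ`). -/
def L2L1w (f : ℝ × ℝ → ℂ) : ℝ≥0∞ :=
  (∫⁻ ξ : ℝ, ((ENNReal.ofReal (jap ξ))⁻¹ * ∫⁻ τ : ℝ, (‖f (τ, ξ)‖₊ : ℝ≥0∞)) ^ 2) ^ (1 / 2 : ℝ)

/-- The `L¹_ξ L²_τ` norm (inner norm in `τ`, outer in `ξ`). -/
def L1L2 (f : ℝ × ℝ → ℂ) : ℝ≥0∞ :=
  ∫⁻ ξ : ℝ, (∫⁻ τ : ℝ, (‖f (τ, ξ)‖₊ : ℝ≥0∞) ^ 2) ^ (1 / 2 : ℝ)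

/-- The Besov-type norm
`∥f∥_X = (∑_j [2^{-j} ∑_d 2^{d/2} ∥f∥_{L²(A_j ∩ B_d)}]²)^{1/2}`
(denoted `X̂^{-1,1/2,1}` in the paper). -/
def Xnorm (f : ℝ × ℝ → ℂ) : ℝ≥0∞ :=
  (∑' j : ℕ, ((2 : ℝ≥0∞) ^ (-(j : ℝ)) *
      ∑' d : ℕ, (2 : ℝ≥0∞) ^ ((d : ℝ) / 2) * L2On f (Aset j ∩ Bset d)) ^ 2) ^ (1 / 2 : ℝ)

/-- The norm `∥f∥_Y = ∥⟨ξ⟩^{-1} f∥_{L²_ξ L¹_τ} + ∥f∥_{L²_ξ L²_τ}`. -/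
def Ynorm (f : ℝ × ℝ → ℂ) : ℝ≥0∞ := L2L1w f + L2 f

/-- The sum-space norm `∥f∥_Z = inf {∥f₁∥_X + ∥f₂∥_Y : f = f₁ + f₂}`. -/
def Znorm (f : ℝ × ℝ → ℂ) : ℝ≥0∞ :=
  ⨅ g : ℝ × ℝ → ℂ, Xnorm g + Ynorm (fun p => f p - g p)

/-- The weight `w(τ,ξ) = max(1,-τ)^{10}` localizing to the upper half-plane. -/
def wfun (p : ℝ × ℝ) : ℝ := max 1 (-p.1) ^ 10

/-- The norm `∥f∥_W = ∥w f∥_Z`. -/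
def Wnorm (f : ℝ × ℝ → ℂ) : ℝ≥0∞ := Znorm (fun p => (wfun p : ℂ) * f p)

/-- Spacetime convolution `(f*g)(τ,ξ) = ∫∫ f(τ₁,ξ₁) g(τ-τ₁, ξ-ξ₁) dτ₁ dξ₁`. -/
def conv (f g : ℝ × ℝ → ℂ) (p : ℝ × ℝ) : ℂ := ∫ q : ℝ × ℝ, f q * g (p - q)

/-- The (Fourier side) `X^{s,b}` norm `∥⟨ξ⟩^s ⟨τ-ξ²⟩^b f∥_{L²_τ L²_ξ}`. -/
def XsbNorm (s b : ℝ) (f : ℝ × ℝ → ℂ) : ℝ≥0∞ :=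
  (∫⁻ p : ℝ × ℝ,
    (ENNReal.ofReal (jap p.2 ^ s * jap (p.1 - p.2 ^ 2) ^ b) * (‖f p‖₊ : ℝ≥0∞)) ^ 2) ^ (1 / 2 : ℝ)

/-- The bilinear-type expression `(w/⟨τ-ξ²⟩)·((f/w) * (g/w))`. -/
def Kop (f g : ℝ × ℝ → ℂ) : ℝ × ℝ → ℂ := fun p =>
  ((wfun p / jap (p.1 - p.2 ^ 2) : ℝ) : ℂ) *
    conv (fun q => f q / (wfun q : ℂ)) (fun q => g q / (wfun q : ℂ)) p

/-!
By Cauchy–Schwarz, `|(f * g)(p)|² ≤ |T(p)| ∫ |f(q)|² |g(p - q)|² dq`, where `T(p)` is the set of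
`q` with `q ∈ B_{d₁}`, `p - q ∈ B_{d₂}` and `|q.2 - (p - q).2| ≥ D`; integrating in `p` gives
`‖f * g‖₂² ≤ sup_p |T(p)| · ‖f‖₂² ‖g‖₂²`. For fixed `q.2` the two shell conditions confine `q.1` to
an interval of length `≲ 2^{min(d₁,d₂)}`, and their sum confines `u = q.2 - (p - q).2` to
`{u : |u² - a| ≲ 2^{max(d₁,d₂)}, |u| ≥ D}`, a set of length `≲ 2^{max(d₁,d₂)} / (2^{max/2} + D)`.
Hence `|T(p)| ≲ 2^{d₁+d₂} / (2^{d₁/2} + 2^{d₂/2} + D)`.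
-/

theorem lintegral_sq_le_measure_mul_lintegral_sq {α : Type*} [MeasurableSpace α] {μ : Measure α}
    {s : Set α} {h : α → ℝ≥0∞} (hh : AEMeasurable h μ) (hsupp : Function.support h ⊆ s) :
    (∫⁻ x, h x ∂μ) ^ 2 ≤ μ s * ∫⁻ x, h x ^ 2 ∂μ := by
  have hsq : ∀ a : ℝ≥0∞, (a ^ (1 / 2 : ℝ)) ^ 2 = a := fun a => by
    rw [← ENNReal.rpow_natCast, ← ENNReal.rpow_mul]; norm_num
  have holder := ENNReal.lintegral_mul_le_Lp_mul_Lq (μ.restrict s) Real.HolderConjugate.two_two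
    aemeasurable_const hh.restrict (f := fun _ => 1)
  simp only [Pi.mul_apply, one_mul, one_pow, lintegral_const, Measure.restrict_apply_univ,
    ENNReal.rpow_two, setLIntegral_eq_of_support_subset hsupp] at holder
  calc (∫⁻ x, h x ∂μ) ^ 2
      ≤ ((μ s) ^ (1 / 2 : ℝ) * (∫⁻ x in s, h x ^ 2 ∂μ) ^ (1 / 2 : ℝ)) ^ 2 := by gcongr
    _ = μ s * ∫⁻ x in s, h x ^ 2 ∂μ := by rw [mul_pow, hsq, hsq]
    _ ≤ μ s * ∫⁻ x, h x ^ 2 ∂μ := by gcongr; exact Measure.restrict_le_self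

theorem lintegral_lconvolution {G : Type*} [MeasurableSpace G] [AddGroup G] [MeasurableAdd₂ G]
    [MeasurableNeg G] {μ : Measure G} [μ.IsAddLeftInvariant] [SFinite μ] {f g : G → ℝ≥0∞}
    (hf : AEMeasurable f μ) (hg : AEMeasurable g μ) :
    ∫⁻ x, (f ⋆ₗ[μ] g) x ∂μ = (∫⁻ x, f x ∂μ) * ∫⁻ x, g x ∂μ := by
  simp only [lconvolution_def]
  rw [lintegral_lintegral_swap (by fun_prop)]
  have inner (y : G) : ∫⁻ x, f y * g (-y + x) ∂μ = f y * ∫⁻ x, g x ∂μ := by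
    rw [lintegral_add_left_eq_self (fun x => f y * g x) (-y), lintegral_const_mul'' _ hg]
  simp only [inner]
  exact lintegral_mul_const'' _ hf

theorem measure_prod_le_mul_of_slices {α β : Type*} [MeasurableSpace α] [MeasurableSpace β]
    {μ : Measure α} {ν : Measure β} [SFinite μ] [SFinite ν] {S : Set (α × β)} {E : Set β}
    {m : ℝ≥0∞} (hS : MeasurableSet S) (hSE : S ⊆ univ ×ˢ E)
    (hm : ∀ y, μ ((fun x => (x, y)) ⁻¹' S) ≤ m) :
    μ.prod ν S ≤ m * ν E := by
  rw [Measure.prod_apply_symm hS]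
  refine (lintegral_mono fun y => ?_).trans (lintegral_indicator_const_le E m)
  by_cases hy : y ∈ E
  · simpa [hy] using hm y
  · have : (fun x => (x, y)) ⁻¹' S = ∅ :=
      eq_empty_of_forall_notMem fun x hx => hy (hSE hx).2
    simp [this]

theorem volume_abs_sq_sub_lt_le {a c D : ℝ} (hc : 0 < c) (hD : 0 ≤ D) :
    volume {u : ℝ | |u ^ 2 - a| < c ∧ D ≤ |u|} ≤ ENNReal.ofReal (8 * c / (√c + D)) := by
  set β := √(a + c)
  set α := max D √(a - c)
  have hα : 0 ≤ α := hD.trans (le_max_left _ _)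
  have habs_mem : ∀ u ∈ {u : ℝ | |u ^ 2 - a| < c ∧ D ≤ |u|}, |u| ∈ Icc α β := by
    rintro u ⟨hu, hDu⟩
    rw [abs_lt] at hu
    have hsq : √(u ^ 2) = |u| := Real.sqrt_sq_eq_abs u
    exact ⟨max_le hDu (hsq ▸ Real.sqrt_le_sqrt (by linarith)),
      hsq ▸ Real.sqrt_le_sqrt (by linarith)⟩
  have hsub : {u : ℝ | |u ^ 2 - a| < c ∧ D ≤ |u|} ⊆ Icc α β ∪ Icc (-β) (-α) := by
    intro u hu
    obtain ⟨h₁, h₂⟩ := habs_mem u hu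
    rcases abs_cases u with ⟨hu', -⟩ | ⟨hu', -⟩
    · exact Or.inl ⟨by linarith, by linarith⟩
    · exact Or.inr ⟨by linarith, by linarith⟩
  -- `(β - α) (√c + D) ≤ 4c` because `β² - α² ≤ 2c` and `D ≤ α`
  have hwidth : β - α ≤ 4 * c / (√c + D) := by
    rcases le_or_gt β α with hle | hlt
    · exact (sub_nonpos.mpr hle).trans (by positivity)
    have hac : 0 ≤ a + c := by
      by_contra! h
      have : β = 0 := Real.sqrt_eq_zero_of_nonpos h.le
      linarith
    have hβ : β ^ 2 = a + c := Real.sq_sqrt hac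
    have hα' : a - c ≤ α ^ 2 := by
      rcases le_total (a - c) 0 with h | h
      · nlinarith
      · nlinarith [Real.sq_sqrt h, le_max_right D √(a - c), Real.sqrt_nonneg (a - c)]
    have hsc : √c ^ 2 = c := Real.sq_sqrt hc.le
    have hdiff : (β - α) * (β + α) ≤ 2 * c := by nlinarith
    have hw : (β - α) ^ 2 ≤ 2 * c := by nlinarith
    have hwc : (β - α) * √c ≤ 2 * c := by
      have : ((β - α) * √c) ^ 2 ≤ (2 * c) ^ 2 := by rw [mul_pow, hsc]; nlinarith
      exact (abs_le_of_sq_le_sq' this (by positivity)).2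
    have hwD : (β - α) * D ≤ 2 * c := by nlinarith [le_max_left D √(a - c)]
    rw [le_div_iff₀ (by positivity)]
    linarith
  calc volume {u : ℝ | |u ^ 2 - a| < c ∧ D ≤ |u|}
      ≤ volume (Icc α β) + volume (Icc (-β) (-α)) :=
        (measure_mono hsub).trans (measure_union_le _ _)
    _ = ENNReal.ofReal (β - α) + ENNReal.ofReal (β - α) := by
      rw [Real.volume_Icc, Real.volume_Icc, neg_sub_neg]
    _ ≤ ENNReal.ofReal (4 * c / (√c + D)) + ENNReal.ofReal (4 * c / (√c + D)) := by gcongr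
    _ = ENNReal.ofReal (8 * c / (√c + D)) := by
      rw [← ENNReal.ofReal_add (by positivity) (by positivity)]; ring_nf

def parabolaNbhd (r : ℝ) : Set (ℝ × ℝ) := {q | |q.1 - q.2 ^ 2| < r}

def interactionSet (r₁ r₂ D : ℝ) (p : ℝ × ℝ) : Set (ℝ × ℝ) :=
  {q | q ∈ parabolaNbhd r₁ ∧ p - q ∈ parabolaNbhd r₂ ∧ D ≤ |q.2 - (p - q).2|}

theorem measurableSet_interactionSet (r₁ r₂ D : ℝ) (p : ℝ × ℝ) :
    MeasurableSet (interactionSet r₁ r₂ D p) := by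
  simp only [interactionSet, parabolaNbhd, mem_ofPred_eq]
  measurability

theorem volume_interactionSet_le {r₁ r₂ D : ℝ} (hr₁ : 0 < r₁) (hr₂ : 0 < r₂) (hD : 0 ≤ D)
    (p : ℝ × ℝ) :
    volume (interactionSet r₁ r₂ D p) ≤
      ENNReal.ofReal (16 * min r₁ r₂ * (r₁ + r₂) / (√(2 * (r₁ + r₂)) + D)) := by
  set U := {u : ℝ | |u ^ 2 - (2 * p.1 - p.2 ^ 2)| < 2 * (r₁ + r₂) ∧ D ≤ |u|}
  set E := (fun y => 2 * y) ⁻¹' ((fun u => u + -p.2) ⁻¹' U)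
  have hE : volume E ≤ ENNReal.ofReal (8 * (r₁ + r₂) / (√(2 * (r₁ + r₂)) + D)) := by
    rw [Real.volume_preimage_mul_left two_ne_zero, measure_preimage_add_right]
    calc ENNReal.ofReal |2⁻¹| * volume U
        ≤ ENNReal.ofReal 2⁻¹ * ENNReal.ofReal (8 * (2 * (r₁ + r₂)) / (√(2 * (r₁ + r₂)) + D)) := by
          rw [abs_of_pos (by norm_num)]
          gcongr
          exact volume_abs_sq_sub_lt_le (by positivity) hD
      _ = _ := by rw [← ENNReal.ofReal_mul (by norm_num)]; ring_nf
  -- adding the two parabola conditions eliminates `q.1`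
  have hsub : interactionSet r₁ r₂ D p ⊆ univ ×ˢ E := by
    rintro ⟨x, y⟩ ⟨h₁, h₂, h₃⟩
    simp only [parabolaNbhd, mem_ofPred_eq, Prod.fst_sub, Prod.snd_sub] at h₁ h₂ h₃
    have hu : 2 * y + -p.2 = y - (p.2 - y) := by ring
    have hsum : (y - (p.2 - y)) ^ 2 - (2 * p.1 - p.2 ^ 2) =
        -2 * ((x - y ^ 2) + (p.1 - x - (p.2 - y) ^ 2)) := by ring
    refine ⟨trivial, ?_⟩
    show |(2 * y + -p.2) ^ 2 - _| < _ ∧ D ≤ |2 * y + -p.2|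
    rw [hu, hsum, abs_mul, abs_neg, abs_two]
    exact ⟨by linarith [abs_add_le (x - y ^ 2) (p.1 - x - (p.2 - y) ^ 2)], h₃⟩
  have hslice (y : ℝ) :
      volume ((fun x => (x, y)) ⁻¹' interactionSet r₁ r₂ D p) ≤ ENNReal.ofReal (2 * min r₁ r₂) := by
    have h₁ : (fun x => (x, y)) ⁻¹' interactionSet r₁ r₂ D p ⊆ Ioo (y ^ 2 - r₁) (y ^ 2 + r₁) :=
      fun x hx => by
        have := abs_lt.mp (show |x - y ^ 2| < r₁ from hx.1)
        constructor <;> linarith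
    have h₂ : (fun x => (x, y)) ⁻¹' interactionSet r₁ r₂ D p ⊆
        Ioo (p.1 - (p.2 - y) ^ 2 - r₂) (p.1 - (p.2 - y) ^ 2 + r₂) := fun x hx => by
      have := abs_lt.mp (show |p.1 - x - (p.2 - y) ^ 2| < r₂ from hx.2.1)
      constructor <;> linarith
    rw [mul_min_of_nonneg _ _ (zero_le_two : (0 : ℝ) ≤ 2), ENNReal.ofReal_min]
    refine le_min ((measure_mono h₁).trans_eq ?_) ((measure_mono h₂).trans_eq ?_) <;>
      rw [Real.volume_Ioo] <;> ring_nf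
  rw [Measure.volume_eq_prod]
  calc (volume.prod volume) (interactionSet r₁ r₂ D p)
      ≤ ENNReal.ofReal (2 * min r₁ r₂) * volume E :=
        measure_prod_le_mul_of_slices (measurableSet_interactionSet r₁ r₂ D p) hsub hslice
    _ ≤ ENNReal.ofReal (2 * min r₁ r₂) *
          ENNReal.ofReal (8 * (r₁ + r₂) / (√(2 * (r₁ + r₂)) + D)) := by gcongr
    _ = _ := by rw [← ENNReal.ofReal_mul (by positivity)]; ring_nf

theorem abs_le_jap (x : ℝ) : |x| ≤ jap x := by
  rw [jap, ← Real.sqrt_sq_eq_abs]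
  exact Real.sqrt_le_sqrt (by linarith)

theorem Bset_subset_parabolaNbhd (d : ℕ) : Bset d ⊆ parabolaNbhd (2 ^ (d + 1)) :=
  fun _ hp => (abs_le_jap _).trans_lt hp.2

theorem two_rpow_half_sq (d : ℕ) : ((2 : ℝ) ^ ((d : ℝ) / 2)) ^ 2 = 2 ^ d := by
  rw [← Real.rpow_natCast, ← Real.rpow_mul zero_le_two]
  norm_num

theorem volume_interactionSet_dyadic_le (d₁ d₂ : ℕ) {D : ℝ} (hD : 0 ≤ D) (p : ℝ × ℝ) :
    volume (interactionSet (2 ^ (d₁ + 1)) (2 ^ (d₂ + 1)) D p) ≤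
      ENNReal.ofReal (128 * 2 ^ (d₁ + d₂) /
        ((2 : ℝ) ^ ((d₁ : ℝ) / 2) + (2 : ℝ) ^ ((d₂ : ℝ) / 2) + D)) := by
  refine (volume_interactionSet_le (by positivity) (by positivity) hD p).trans
    (ENNReal.ofReal_le_ofReal (div_le_div₀ (by positivity) ?_ (by positivity) ?_))
  · set a : ℝ := 2 ^ (d₁ + 1)
    set b : ℝ := 2 ^ (d₂ + 1)
    have hmin : min a b * (a + b) ≤ 2 * a * b := by
      rw [mul_add]
      nlinarith [mul_le_mul_of_nonneg_right (min_le_right a b) (by positivity : (0 : ℝ) ≤ a),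
        mul_le_mul_of_nonneg_right (min_le_left a b) (by positivity : (0 : ℝ) ≤ b)]
    calc 16 * min a b * (a + b) ≤ 16 * (2 * a * b) := by linarith
      _ = 128 * 2 ^ (d₁ + d₂) := by ring
  · have e₁ : (2 : ℝ) ^ (d₁ + 1) = 2 * ((2 : ℝ) ^ ((d₁ : ℝ) / 2)) ^ 2 := by
      rw [two_rpow_half_sq, pow_succ, mul_comm]
    have e₂ : (2 : ℝ) ^ (d₂ + 1) = 2 * ((2 : ℝ) ^ ((d₂ : ℝ) / 2)) ^ 2 := by
      rw [two_rpow_half_sq, pow_succ, mul_comm]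
    gcongr
    rw [Real.le_sqrt (by positivity) (by positivity), e₁, e₂]
    nlinarith [sq_nonneg ((2 : ℝ) ^ ((d₁ : ℝ) / 2) - (2 : ℝ) ^ ((d₂ : ℝ) / 2))]

theorem enorm_conv_sq_le {f g : ℝ × ℝ → ℂ} (hf : AEStronglyMeasurable f)
    (hg : AEStronglyMeasurable g)
    {p : ℝ × ℝ} {T : Set (ℝ × ℝ)} (hT : ∀ q, f q ≠ 0 → g (p - q) ≠ 0 → q ∈ T) :
    ‖conv f g p‖ₑ ^ 2 ≤ volume T * ((fun q => ‖f q‖ₑ ^ 2) ⋆ₗ fun q => ‖g q‖ₑ ^ 2) p := by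
  have hgp : AEMeasurable (fun q => ‖g (p - q)‖ₑ) :=
    hg.enorm.comp_quasiMeasurePreserving (quasiMeasurePreserving_sub_left volume p)
  have hsupp : Function.support (fun q => ‖f q‖ₑ * ‖g (p - q)‖ₑ) ⊆ T := fun q hq => by
    simp only [Function.mem_support, mul_ne_zero_iff, enorm_ne_zero] at hq
    exact hT q hq.1 hq.2
  calc ‖conv f g p‖ₑ ^ 2 ≤ (∫⁻ q, ‖f q‖ₑ * ‖g (p - q)‖ₑ) ^ 2 := by
        gcongr
        exact (enorm_integral_le_lintegral_enorm _).trans_eq (by simp only [enorm_mul])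
    _ ≤ volume T * ∫⁻ q, (‖f q‖ₑ * ‖g (p - q)‖ₑ) ^ 2 :=
        lintegral_sq_le_measure_mul_lintegral_sq (hf.enorm.mul hgp) hsupp
    _ = volume T * ((fun q => ‖f q‖ₑ ^ 2) ⋆ₗ fun q => ‖g q‖ₑ ^ 2) p := by
        simp only [lconvolution_def, mul_pow, neg_add_eq_sub]

theorem L2_conv_le_of_volume_le {f g : ℝ × ℝ → ℂ} (hf : AEStronglyMeasurable f)
    (hg : AEStronglyMeasurable g) {T : ℝ × ℝ → Set (ℝ × ℝ)}
    (hT : ∀ p q, f q ≠ 0 → g (p - q) ≠ 0 → q ∈ T p) {M : ℝ≥0∞} (hM : ∀ p, volume (T p) ≤ M) :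
    L2 (conv f g) ≤ M ^ (1 / 2 : ℝ) * L2 f * L2 g := by
  have hF : AEMeasurable fun q => ‖f q‖ₑ ^ 2 := hf.enorm.pow_const 2
  have hG : AEMeasurable fun q => ‖g q‖ₑ ^ 2 := hg.enorm.pow_const 2
  have hsq : ∫⁻ p, ‖conv f g p‖ₑ ^ 2 ≤ M * ((∫⁻ q, ‖f q‖ₑ ^ 2) * ∫⁻ q, ‖g q‖ₑ ^ 2) := calc
    ∫⁻ p, ‖conv f g p‖ₑ ^ 2 ≤ ∫⁻ p, M * ((fun q => ‖f q‖ₑ ^ 2) ⋆ₗ fun q => ‖g q‖ₑ ^ 2) p :=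
        lintegral_mono fun p => (enorm_conv_sq_le hf hg (hT p)).trans (by gcongr; exact hM p)
    _ = M * ((∫⁻ q, ‖f q‖ₑ ^ 2) * ∫⁻ q, ‖g q‖ₑ ^ 2) := by
        rw [lintegral_const_mul'' M (aemeasurable_lconvolution hF hG), lintegral_lconvolution hF hG]
  calc L2 (conv f g) ≤ (M * ((∫⁻ q, ‖f q‖ₑ ^ 2) * ∫⁻ q, ‖g q‖ₑ ^ 2)) ^ (1 / 2 : ℝ) :=
        ENNReal.rpow_le_rpow hsq (by norm_num)
    _ = M ^ (1 / 2 : ℝ) * L2 f * L2 g := by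
        rw [ENNReal.mul_rpow_of_nonneg _ _ (by norm_num),
          ENNReal.mul_rpow_of_nonneg _ _ (by norm_num), mul_assoc]
        rfl

/-- **Dyadic bilinear estimate**: if `f ∈ L²` is supported on `B_{d₁}` and `g ∈ L²` on
`B_{d₂}`, with `ξ`-supports separated by at least `D`, then
`∥f*g∥_{L²} ≤ C 2^{(d₁+d₂)/2}(2^{d₁/2}+2^{d₂/2}+D)^{-1/2} ∥f∥_{L²} ∥g∥_{L²}`. -/
theorem dyadic_bilinear_estimate :
    ∃ C : ℝ, 0 < C ∧ ∀ (d₁ d₂ : ℕ) (D : ℝ), 0 ≤ D →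
      ∀ f g : ℝ × ℝ → ℂ, MemLp f 2 volume → MemLp g 2 volume →
        Function.support f ⊆ Bset d₁ → Function.support g ⊆ Bset d₂ →
        (∀ p q : ℝ × ℝ, f p ≠ 0 → g q ≠ 0 → D ≤ |p.2 - q.2|) →
        L2 (conv f g) ≤
          ENNReal.ofReal (C * (2 : ℝ) ^ (((d₁ : ℝ) + (d₂ : ℝ)) / 2) *
              ((2 : ℝ) ^ ((d₁ : ℝ) / 2) + (2 : ℝ) ^ ((d₂ : ℝ) / 2) + D) ^ (-(1 / 2) : ℝ)) *
            L2 f * L2 g := by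
  refine ⟨√128, by positivity, fun d₁ d₂ D hD f g hf hg hsf hsg hsep => ?_⟩
  set K := (2 : ℝ) ^ ((d₁ : ℝ) / 2) + (2 : ℝ) ^ ((d₂ : ℝ) / 2) + D
  have hK : 0 < K := by positivity
  have hsqrt : ENNReal.ofReal (128 * 2 ^ (d₁ + d₂) / K) ^ (1 / 2 : ℝ) =
      ENNReal.ofReal (√128 * (2 : ℝ) ^ (((d₁ : ℝ) + (d₂ : ℝ)) / 2) * K ^ (-(1 / 2) : ℝ)) := by
    rw [ENNReal.ofReal_rpow_of_nonneg (by positivity) (by norm_num), div_eq_mul_inv,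
      Real.mul_rpow (by positivity) (by positivity), Real.mul_rpow (by positivity) (by positivity),
      ← Real.sqrt_eq_rpow, ← Real.rpow_natCast, ← Real.rpow_mul zero_le_two, Real.inv_rpow hK.le,
      ← Real.rpow_neg hK.le]
    push_cast
    ring_nf
  rw [← hsqrt]
  refine L2_conv_le_of_volume_le hf.1 hg.1 (fun p q hfq hgq => ?_)
    (volume_interactionSet_dyadic_le d₁ d₂ hD)
  exact ⟨Bset_subset_parabolaNbhd d₁ (hsf hfq), Bset_subset_parabolaNbhd d₂ (hsg hgq),
    hsep q (p - q) hfq hgq⟩
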